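/- With the setup of the diagonalized second fundamental form (orthonormal basis X₁,…,X_{2n} with α(X_i,X_j)=0 for i≠j, K_{ij} = c + ⟨α_i,α_j⟩, Kaehler identity for the Gauss curvature tensor): if K_{ij} ≠ 0 for some i ≠ j, then (i) span{X_i, X_j} is J-invariant (holomorphic); (ii) K_{ik} = K_{jk} = 0 for all k ∉ {i,j}; and (iii) ⟨α_i - α_j, α_k⟩ = 0 for all k ∉ {i,j}. -/

import Mathlib

open scoped RealInnerProductSpace

/-- The (4,0)-curvature tensor `⟨R(X,Y)Z,W⟩` determined by the Gauss equation in a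
space form of curvature `c`. -/
noncomputable def gaussR {V N : Type*} [NormedAddCommGroup V] [InnerProductSpace ℝ V]
    [NormedAddCommGroup N] [InnerProductSpace ℝ N]
    (c : ℝ) (α : V →ₗ[ℝ] V →ₗ[ℝ] N) (X Y Z W : V) : ℝ :=
  c * (⟪Y, Z⟫ * ⟪X, W⟫ - ⟪X, Z⟫ * ⟪Y, W⟫) + ⟪α X W, α Y Z⟫ - ⟪α X Z, α Y W⟫

/-!
With `α` diagonal in the orthonormal basis, the Gauss tensor on `X_p, X_q` is `K_pq` times the
tensor of the unit sphere. Evaluating the Kähler identity on `(X_p, X_q, X_q, X_p)` gives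
`K_pq (⟨X_p, J X_q⟩² - 1) = 0`. So `K_ij ≠ 0` forces `⟨X_i, J X_j⟩ = ±1`, i.e. `J X_j = ±X_i`
by the equality case of Cauchy–Schwarz; then `⟨X_i, J X_k⟩ = ⟨X_j, J X_k⟩ = 0` for every other
`k`, which in turn forces `K_ik = K_jk = 0`.
-/

section

variable {V N : Type*} [NormedAddCommGroup V] [InnerProductSpace ℝ V]
  [NormedAddCommGroup N] [InnerProductSpace ℝ N]

theorem eq_inner_smul_of_inner_sq_eq_one {u x : V} (hu : ‖u‖ = 1) (hx : ‖x‖ = 1)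
    (h : ⟪u, x⟫ ^ 2 = 1) : x = ⟪u, x⟫ • u := by
  rw [← sub_eq_zero, ← norm_eq_zero, ← sq_eq_zero_iff, norm_sub_sq_real, norm_smul,
    real_inner_smul_right, real_inner_comm, Real.norm_eq_abs, mul_pow, sq_abs, hu, hx]
  rw [real_inner_comm] at h
  linear_combination (-1 : ℝ) * h

section ComplexStructure

variable {J : V →ₗ[ℝ] V} (hJorth : ∀ X Y : V, ⟪J X, J Y⟫ = ⟪X, Y⟫)
include hJorth

theorem norm_map_eq_of_inner_map (X : V) : ‖J X‖ = ‖X‖ := by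
  rw [norm_eq_sqrt_real_inner, norm_eq_sqrt_real_inner, hJorth]

variable (hJ2 : ∀ X : V, J (J X) = -X)
include hJ2

theorem inner_map_left_eq_neg_inner_map_right (X Y : V) : ⟪J X, Y⟫ = -⟪X, J Y⟫ := by
  have h := hJorth X (J Y)
  rw [hJ2, inner_neg_right] at h
  linarith

theorem inner_self_map_eq_zero (X : V) : ⟪X, J X⟫ = 0 := by
  have h := inner_map_left_eq_neg_inner_map_right hJorth hJ2 X X
  rw [real_inner_comm] at h
  linarith

end ComplexStructure

variable {ι : Type*} [Fintype ι] {α : V →ₗ[ℝ] V →ₗ[ℝ] N} {b : Module.Basis ι ℝ V}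
  (hb : Orthonormal ℝ b) (hdiag : ∀ p q : ι, p ≠ q → α (b p) (b q) = 0)
include hb hdiag

theorem apply_basis_eq_inner_smul_of_diag (p : ι) (v : V) :
    α (b p) v = ⟪b p, v⟫ • α (b p) (b p) := by
  set B := b.toOrthonormalBasis hb
  have hB : ⇑B = ⇑b := b.coe_toOrthonormalBasis hb
  conv_lhs => rw [← B.sum_repr' v, hB]
  rw [map_sum, Finset.sum_eq_single p]
  · rw [map_smul]
  · intro q _ hqp
    rw [map_smul, hdiag p q hqp.symm, smul_zero]
  · simp

theorem gaussR_basis (c : ℝ) (p q : ι) (Z W : V) :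
    gaussR c α (b p) (b q) Z W = (c + ⟪α (b p) (b p), α (b q) (b q)⟫) *
      (⟪b q, Z⟫ * ⟪b p, W⟫ - ⟪b p, Z⟫ * ⟪b q, W⟫) := by
  unfold gaussR
  have hα := apply_basis_eq_inner_smul_of_diag hb hdiag
  rw [hα p W, hα q Z, hα p Z, hα q W]
  simp only [real_inner_smul_left, real_inner_smul_right]
  ring

variable {c : ℝ} {J : V →ₗ[ℝ] V} (hJorth : ∀ X Y : V, ⟪J X, J Y⟫ = ⟪X, Y⟫)
  (hJ2 : ∀ X : V, J (J X) = -X)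
  (hKaehler : ∀ X Y Z W : V, gaussR c α X Y (J Z) (J W) = gaussR c α X Y Z W)
include hJorth hJ2 hKaehler

theorem curv_mul_inner_map_sq_sub_one_eq_zero {p q : ι} (hpq : p ≠ q) :
    (c + ⟪α (b p) (b p), α (b q) (b q)⟫) * (⟪b p, J (b q)⟫ ^ 2 - 1) = 0 := by
  have h := hKaehler (b p) (b q) (b q) (b p)
  rw [gaussR_basis hb hdiag, gaussR_basis hb hdiag, inner_self_map_eq_zero hJorth hJ2,
    real_inner_comm (J (b p)) (b q), inner_map_left_eq_neg_inner_map_right hJorth hJ2,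
    real_inner_self_eq_norm_sq, real_inner_self_eq_norm_sq, hb.1, hb.1, hb.2 hpq,
    hb.2 hpq.symm] at h
  linear_combination h

theorem map_basis_eq_inner_smul_of_curv_ne_zero {p q : ι} (hpq : p ≠ q)
    (hK : c + ⟪α (b p) (b p), α (b q) (b q)⟫ ≠ 0) :
    J (b q) = ⟪b p, J (b q)⟫ • b p := by
  have hsq : ⟪b p, J (b q)⟫ ^ 2 = 1 := by
    have h := curv_mul_inner_map_sq_sub_one_eq_zero hb hdiag hJorth hJ2 hKaehler hpq
    linarith [(mul_eq_zero.mp h).resolve_left hK]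
  refine eq_inner_smul_of_inner_sq_eq_one (hb.1 p) ?_ hsq
  rw [norm_map_eq_of_inner_map hJorth, hb.1]

theorem curv_eq_zero_of_map_basis_eq_smul {p q k : ι} (hpk : p ≠ k) (hqk : q ≠ k) {t : ℝ}
    (hJp : J (b p) = t • b q) : c + ⟪α (b p) (b p), α (b k) (b k)⟫ = 0 := by
  have hinner : ⟪b p, J (b k)⟫ = 0 := by
    rw [← neg_eq_zero, ← inner_map_left_eq_neg_inner_map_right hJorth hJ2, hJp,
      real_inner_smul_left, hb.2 hqk, mul_zero]
  have h := curv_mul_inner_map_sq_sub_one_eq_zero hb hdiag hJorth hJ2 hKaehler hpk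
  rw [hinner] at h
  linear_combination -h

end

theorem stmt_9_general
    (V N : Type*) [NormedAddCommGroup V] [InnerProductSpace ℝ V]
    [NormedAddCommGroup N] [InnerProductSpace ℝ N]
    (n : ℕ) (c : ℝ)
    (J : V →ₗ[ℝ] V) (hJ2 : ∀ X : V, J (J X) = -X)
    (hJorth : ∀ X Y : V, ⟪J X, J Y⟫ = ⟪X, Y⟫)
    (α : V →ₗ[ℝ] V →ₗ[ℝ] N)
    (hKaehler : ∀ X Y Z W : V, gaussR c α X Y (J Z) (J W) = gaussR c α X Y Z W)
    (b : Module.Basis (Fin (2 * n)) ℝ V) (hb : Orthonormal ℝ b)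
    (hdiag : ∀ i j : Fin (2 * n), i ≠ j → α (b i) (b j) = 0)
    (i j : Fin (2 * n)) (hij : i ≠ j)
    (hKij : c + ⟪α (b i) (b i), α (b j) (b j)⟫ ≠ 0) :
    (∀ v ∈ Submodule.span ℝ {b i, b j}, J v ∈ Submodule.span ℝ {b i, b j}) ∧
      (∀ k : Fin (2 * n), k ≠ i → k ≠ j →
        c + ⟪α (b i) (b i), α (b k) (b k)⟫ = 0 ∧
        c + ⟪α (b j) (b j), α (b k) (b k)⟫ = 0) ∧
      (∀ k : Fin (2 * n), k ≠ i → k ≠ j →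
        ⟪α (b i) (b i) - α (b j) (b j), α (b k) (b k)⟫ = 0) := by
  have hKji : c + ⟪α (b j) (b j), α (b i) (b i)⟫ ≠ 0 := by rwa [real_inner_comm]
  have hJj := map_basis_eq_inner_smul_of_curv_ne_zero hb hdiag hJorth hJ2 hKaehler hij hKij
  have hJi := map_basis_eq_inner_smul_of_curv_ne_zero hb hdiag hJorth hJ2 hKaehler hij.symm hKji
  have hK : ∀ k, k ≠ i → k ≠ j →
      c + ⟪α (b i) (b i), α (b k) (b k)⟫ = 0 ∧
        c + ⟪α (b j) (b j), α (b k) (b k)⟫ = 0 :=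
    fun k hki hkj =>
      ⟨curv_eq_zero_of_map_basis_eq_smul hb hdiag hJorth hJ2 hKaehler hki.symm hkj.symm hJi,
        curv_eq_zero_of_map_basis_eq_smul hb hdiag hJorth hJ2 hKaehler hkj.symm hki.symm hJj⟩
  refine ⟨fun v hv => ?_, hK, fun k hki hkj => ?_⟩
  · have hspan : Submodule.span ℝ {b i, b j} ≤ (Submodule.span ℝ {b i, b j}).comap J := by
      rw [Submodule.span_le, Set.insert_subset_iff, Set.singleton_subset_iff]
      constructor
      · rw [SetLike.mem_coe, Submodule.mem_comap, hJi]
        exact Submodule.smul_mem _ _ (Submodule.subset_span (by simp))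
      · rw [SetLike.mem_coe, Submodule.mem_comap, hJj]
        exact Submodule.smul_mem _ _ (Submodule.subset_span (by simp))
    exact hspan hv
  · rw [inner_sub_left]
    linarith [hK k hki hkj]

/-- Lemma 8 of the paper, parts (i), (ii), (iii). -/
theorem stmt_9
    (V N : Type*) [NormedAddCommGroup V] [InnerProductSpace ℝ V] [FiniteDimensional ℝ V]
    [NormedAddCommGroup N] [InnerProductSpace ℝ N]
    (n : ℕ) (c : ℝ)
    (J : V →ₗ[ℝ] V) (hJ2 : ∀ X : V, J (J X) = -X)
    (hJorth : ∀ X Y : V, ⟪J X, J Y⟫ = ⟪X, Y⟫)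
    (α : V →ₗ[ℝ] V →ₗ[ℝ] N) (hαsymm : ∀ X Y : V, α X Y = α Y X)
    (hKaehler : ∀ X Y Z W : V, gaussR c α X Y (J Z) (J W) = gaussR c α X Y Z W)
    (b : Module.Basis (Fin (2 * n)) ℝ V) (hb : Orthonormal ℝ b)
    (hdiag : ∀ i j : Fin (2 * n), i ≠ j → α (b i) (b j) = 0)
    (i j : Fin (2 * n)) (hij : i ≠ j)
    (hKij : c + ⟪α (b i) (b i), α (b j) (b j)⟫ ≠ 0) :
    (∀ v ∈ Submodule.span ℝ {b i, b j}, J v ∈ Submodule.span ℝ {b i, b j}) ∧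
      (∀ k : Fin (2 * n), k ≠ i → k ≠ j →
        c + ⟪α (b i) (b i), α (b k) (b k)⟫ = 0 ∧
        c + ⟪α (b j) (b j), α (b k) (b k)⟫ = 0) ∧
      (∀ k : Fin (2 * n), k ≠ i → k ≠ j →
        ⟪α (b i) (b i) - α (b j) (b j), α (b k) (b k)⟫ = 0) :=
  stmt_9_general V N n c J hJ2 hJorth α hKaehler b hb hdiag i j hij hKij
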